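/- arXiv:1302.6728 — 2 statements merged into one kernel-verified Lean document; each statement's English description precedes it below -/
import Mathlib

section
/- Let L be a finite-dimensional nilpotent Lie algebra over a field k with dim L = n, dim [L,L] = m and dim Z(L) = d. Then dim M(L) ≤ (1/2)(n−m)(n−m−1) + m(n−d−1). -/
/-!
Write `R = ker π`. Modulo `[F, R]` the bracket of `F` only depends on the images in `L`, so it
defines an alternating bilinear map `B : L × L → F/[F, R]` whose image spans the image of
`[F, F]`; and `B([L, L], Z(L)) = 0`, since `[[a, b], c] = [a, [b, c]] - [b, [a, c]]` lies in
`[F, R]` as soon as `π c` is central. As `π` maps the image of `[F, F]` onto `[L, L]` with kernel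
the image of `R ∩ [F, F]`, i.e. `M(L)`, we get `dim M(L) + m = dim span B(L, L)`. Splitting
`L = [L, L] ⊕ C` and `L = Z(L) ⊕ C'`, the span of `B(L, L)` is that of `B([L, L], C')` and
`B(C, C)`, of dimensions at most `m (n - d)` and `(n - m).choose 2`.
-/

/-- The dimension of the Schur multiplier `M(L) = (R ∩ [F,F]) / [F,R]` of a Lie algebra `L`
computed from a free presentation `π : F ↠ L`, `F` a free Lie algebra, `R = ker π`
(Hopf formula). -/
noncomputable def schurMultiplierDim (k : Type*) [Field k] {X : Type*} {L : Type*}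
    [LieRing L] [LieAlgebra k L] (π : FreeLieAlgebra k X →ₗ⁅k⁆ L) : ℕ :=
  let F := FreeLieAlgebra k X
  let R : LieIdeal k F := π.ker
  let D : LieIdeal k F := ⁅(⊤ : LieIdeal k F), (⊤ : LieIdeal k F)⁆
  let S : Submodule k F := (R ⊓ D : LieIdeal k F)
  Module.finrank k
    (↥S ⧸ (Submodule.comap S.subtype ((⁅(⊤ : LieIdeal k F), R⁆ : LieIdeal k F) : Submodule k F)))

open Module Submodule Finset LieAlgebra

section Bilinear

variable {k V W M : Type*} [Field k] [AddCommGroup V] [Module k V] [AddCommGroup W] [Module k W]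
  [AddCommGroup M] [Module k M]

instance Submodule.finiteDimensional_map₂ (f : V →ₗ[k] W →ₗ[k] M) (p : Submodule k V)
    (q : Submodule k W) [FiniteDimensional k p] [FiniteDimensional k q] :
    FiniteDimensional k (map₂ f p q) := by
  rw [TensorProduct.map₂_eq_range_lift_comp_mapIncl]
  infer_instance

theorem Submodule.finrank_map₂_le (f : V →ₗ[k] W →ₗ[k] M) (p : Submodule k V) (q : Submodule k W)
    [FiniteDimensional k p] [FiniteDimensional k q] :
    finrank k (map₂ f p q) ≤ finrank k p * finrank k q := by
  rw [TensorProduct.map₂_eq_range_lift_comp_mapIncl, ← finrank_tensorProduct]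
  exact LinearMap.finrank_range_le _

theorem Module.Basis.span_range_coe {p : Submodule k V} {ι : Type*} (b : Basis ι k p) :
    span k (Set.range fun i => (b i : V)) = p := by
  change span k (Set.range (p.subtype ∘ b)) = p
  rw [Set.range_comp, span_image, b.span_eq, map_subtype_top]

theorem LinearMap.IsAlt.finrank_map₂_le_choose_two {B : V →ₗ[k] V →ₗ[k] M} (hB : B.IsAlt)
    (p : Submodule k V) [FiniteDimensional k p] :
    finrank k (map₂ B p p) ≤ (finrank k p).choose 2 := by
  classical
  let b := Module.finBasis k p
  let P : Finset (Fin (finrank k p) × Fin (finrank k p)) := {x | x.1 < x.2}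
  let T : Finset M := P.image fun x => B (b x.1) (b x.2)
  have hT_mem {i j} (h : i < j) : B (b i) (b j) ∈ (T : Set M) :=
    mem_coe.2 (mem_image.2 ⟨(i, j), mem_filter.2 ⟨mem_univ _, h⟩, rfl⟩)
  have hT : map₂ B p p ≤ span k T := by
    rw [← b.span_range_coe, map₂_span_span, span_le]
    rintro _ ⟨_, ⟨i, rfl⟩, _, ⟨j, rfl⟩, rfl⟩
    change B (b i) (b j) ∈ span k T
    rcases lt_trichotomy i j with h | rfl | h
    · exact subset_span (hT_mem h)
    · exact hB.self_eq_zero _ ▸ zero_mem _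
    · exact hB.neg _ _ ▸ neg_mem (subset_span (hT_mem h))
  calc finrank k (map₂ B p p) ≤ finrank k (span k (T : Set M)) := finrank_mono hT
    _ ≤ T.card := finrank_span_finset_le_card T
    _ ≤ #P := card_image_le
    _ = (finrank k p).choose 2 := by rw [Fintype.card_product_filter_lt, Fintype.card_fin]

theorem LinearMap.IsAlt.finrank_map₂_top_le {B : V →ₗ[k] V →ₗ[k] M} (hB : B.IsAlt)
    [FiniteDimensional k V] {A Z : Submodule k V} (hAZ : ∀ a ∈ A, ∀ z ∈ Z, B a z = 0) :
    finrank k (map₂ B ⊤ ⊤) ≤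
      (finrank k V - finrank k A).choose 2 + finrank k A * (finrank k V - finrank k Z) := by
  obtain ⟨C, hAC⟩ := A.exists_isCompl
  obtain ⟨C', hZC'⟩ := Z.exists_isCompl
  have hAtop : map₂ B A ⊤ ≤ map₂ B A C' := by
    rw [← hZC'.sup_eq_top, map₂_sup_right, sup_le_iff, map₂_le]
    refine ⟨fun a ha z hz => hAZ a ha z hz ▸ zero_mem _, le_rfl⟩
  have hCA : map₂ B C A ≤ map₂ B A ⊤ := map₂_le.2 fun c _ a ha =>
    hB.neg a c ▸ neg_mem (apply_mem_map₂ B ha mem_top)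
  have htop : map₂ B ⊤ ⊤ ≤ map₂ B A C' ⊔ map₂ B C C := by
    rw [← hAC.sup_eq_top, map₂_sup_left, hAC.sup_eq_top]
    nth_rw 2 [← hAC.sup_eq_top]
    rw [map₂_sup_right]
    exact sup_le (hAtop.trans le_sup_left)
      (sup_le (hCA.trans (hAtop.trans le_sup_left)) le_sup_right)
  have hC : finrank k C = finrank k V - finrank k A := by
    rw [← finrank_add_eq_of_isCompl hAC, Nat.add_sub_cancel_left]
  have hC' : finrank k C' = finrank k V - finrank k Z := by
    rw [← finrank_add_eq_of_isCompl hZC', Nat.add_sub_cancel_left]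
  calc finrank k (map₂ B ⊤ ⊤) ≤ finrank k ↥(map₂ B A C' ⊔ map₂ B C C) := finrank_mono htop
    _ ≤ finrank k (map₂ B A C') + finrank k (map₂ B C C) :=
        finrank_add_le_finrank_add_finrank _ _
    _ ≤ finrank k A * finrank k C' + (finrank k C).choose 2 :=
        add_le_add (finrank_map₂_le B A C') (hB.finrank_map₂_le_choose_two C)
    _ = _ := by rw [hC, hC', add_comm]

end Bilinear

section Quotient

variable {k V W : Type*} [Field k] [AddCommGroup V] [Module k V] [AddCommGroup W] [Module k W]

theorem Submodule.finrank_quotient_comap_subtype_eq (S J : Submodule k V) :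
    finrank k (S ⧸ comap S.subtype J) = finrank k (map J.mkQ S) := by
  have hker : LinearMap.ker (J.mkQ ∘ₗ S.subtype) = comap S.subtype J := by
    rw [LinearMap.ker_comp, ker_mkQ]
  have hrange : LinearMap.range (J.mkQ ∘ₗ S.subtype) = map J.mkQ S := by
    rw [LinearMap.range_comp, range_subtype]
  exact ((quotEquivOfEq _ _ hker.symm).trans ((J.mkQ ∘ₗ S.subtype).quotKerEquivRange.trans
    (LinearEquiv.ofEq _ _ hrange))).finrank_eq

theorem Submodule.finrank_map_mkQ_inf_ker_add_finrank_map {f : V →ₗ[k] W} {J : Submodule k V}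
    (hJ : J ≤ LinearMap.ker f) (D : Submodule k V) [FiniteDimensional k (map J.mkQ D)] :
    finrank k (map J.mkQ (LinearMap.ker f ⊓ D)) + finrank k (map f D) =
      finrank k (map J.mkQ D) := by
  let g := (J.liftQ f hJ).domRestrict (map J.mkQ D)
  have hrange : LinearMap.range g = map f D := by
    rw [LinearMap.range_domRestrict, ← map_comp, liftQ_mkQ]
  have hker : LinearMap.ker g = comap (map J.mkQ D).subtype (map J.mkQ (LinearMap.ker f ⊓ D)) := by
    ext ⟨_, u, hu, rfl⟩
    simp only [g, LinearMap.mem_ker, LinearMap.domRestrict_apply, mkQ_apply, liftQ_apply,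
      mem_comap, subtype_apply, mem_map, mem_inf]
    refine ⟨fun hfu => ⟨u, ⟨hfu, hu⟩, rfl⟩, fun ⟨v, ⟨hfv, _⟩, huv⟩ => ?_⟩
    have hvu : f (v - u) = 0 := hJ ((Quotient.eq J).1 huv)
    rwa [map_sub, hfv, zero_sub, neg_eq_zero] at hvu
  have := g.finrank_range_add_finrank_ker
  rwa [hrange, hker, (comapSubtypeEquivOfLe (map_mono inf_le_right)).finrank_eq, add_comm] at this

end Quotient

theorem LieSubmodule.lie_lie_le {R L M : Type*} [CommRing R] [LieRing L] [LieAlgebra R L]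
    [AddCommGroup M] [Module R M] [LieRingModule L M] [LieModule R L M]
    (I J : LieIdeal R L) (N : LieSubmodule R L M) :
    ⁅⁅I, J⁆, N⁆ ≤ ⁅I, ⁅J, N⁆⁆ ⊔ ⁅J, ⁅I, N⁆⁆ := by
  rw [lie_le_iff]
  intro x hx m hm
  rw [← mem_toSubmodule, lieIdeal_oper_eq_linear_span'] at hx
  induction hx using Submodule.span_induction with
  | mem _ h =>
    obtain ⟨a, ha, b, hb, rfl⟩ := h
    rw [lie_lie]
    exact sub_mem (mem_sup_left (lie_mem_lie ha (lie_mem_lie hb hm)))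
      (mem_sup_right (lie_mem_lie hb (lie_mem_lie ha hm)))
  | zero => simp
  | add _ _ _ _ hx hy => rw [add_lie]; exact add_mem hx hy
  | smul c _ _ hx => rw [smul_lie]; exact smul_mem _ c hx

namespace LieHom

variable {k F L : Type*} [CommRing k] [LieRing F] [LieAlgebra k F] [LieRing L] [LieAlgebra k L]
  (π : F →ₗ⁅k⁆ L)

abbrev kerCommutator : Submodule k F := (⁅(⊤ : LieIdeal k F), π.ker⁆ : LieIdeal k F)

/-- Modulo `[F, ker π]` the bracket of `F` only depends on the images in `L`
(`bracketForm_apply_map_map`), so it descends along any linear section `σ` of `π`. -/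
def bracketForm (σ : L →ₗ[k] F) : L →ₗ[k] L →ₗ[k] F ⧸ π.kerCommutator :=
  ((LieModule.toEnd k F F : F →ₗ[k] Module.End k F).compl₁₂ σ σ).compr₂ π.kerCommutator.mkQ

variable {π} {σ : L →ₗ[k] F}

@[simp]
theorem bracketForm_apply (x y : L) :
    π.bracketForm σ x y = π.kerCommutator.mkQ ⁅σ x, σ y⁆ :=
  rfl

theorem bracketForm_isAlt : (π.bracketForm σ).IsAlt := fun x => by
  rw [bracketForm_apply, lie_self, map_zero]

theorem lie_mem_kerCommutator (u : F) {r : F} (hr : r ∈ π.ker) : ⁅u, r⁆ ∈ π.kerCommutator :=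
  LieSubmodule.lie_mem_lie (LieSubmodule.mem_top u) hr

theorem bracketForm_apply_map_map (hσ : ∀ x, π (σ x) = x) (u v : F) :
    π.bracketForm σ (π u) (π v) = π.kerCommutator.mkQ ⁅u, v⁆ := by
  have hker (w : F) : σ (π w) - w ∈ π.ker := by simp [hσ]
  have hdiff : ⁅σ (π u), σ (π v)⁆ - ⁅u, v⁆ = ⁅u, σ (π v) - v⁆ - ⁅σ (π v), σ (π u) - u⁆ := by
    simp only [lie_sub, ← lie_skew (σ (π v)), sub_lie]
    abel
  rw [bracketForm_apply, mkQ_apply, mkQ_apply, Submodule.Quotient.eq, hdiff]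
  exact sub_mem (lie_mem_kerCommutator _ (hker v)) (lie_mem_kerCommutator _ (hker u))

theorem map_mkQ_derivedSeries_one (hπ : Function.Surjective π) (hσ : ∀ x, π (σ x) = x) :
    map π.kerCommutator.mkQ (derivedSeries k F 1 : Submodule k F) = map₂ (π.bracketForm σ) ⊤ ⊤ := by
  rw [coe_derivedSeries_one_eq, map_span, map₂_eq_span_image2]
  congr 1
  ext w
  constructor
  · rintro ⟨_, ⟨u, v, rfl⟩, rfl⟩
    exact ⟨π u, mem_top, π v, mem_top, bracketForm_apply_map_map hσ u v⟩
  · rintro ⟨x, -, y, -, rfl⟩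
    obtain ⟨u, rfl⟩ := hπ x
    obtain ⟨v, rfl⟩ := hπ y
    exact ⟨_, ⟨u, v, rfl⟩, (bracketForm_apply_map_map hσ u v).symm⟩

theorem bracketForm_eq_zero_of_mem_center (hπ : Function.Surjective π) (hσ : ∀ x, π (σ x) = x)
    {x z : L} (hx : x ∈ derivedSeries k L 1) (hz : z ∈ center k L) :
    π.bracketForm σ x z = 0 := by
  let P : LieIdeal k F := (center k L).comap π
  have hP : ⁅(⊤ : LieIdeal k F), P⁆ ≤ π.ker :=
    (LieSubmodule.lie_le_iff _ _ _).2 fun u _ p hp => by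
      rw [mem_ker, LieHom.map_lie]
      exact (LieModule.mem_maxTrivSubmodule k L L _).1 hp (π u)
  have hσz : σ z ∈ P := by simpa [P, hσ] using hz
  rw [← LieIdeal.derivedSeries_map_eq 1 hπ, ← LieSubmodule.mem_toSubmodule,
    LieIdeal.coe_map_of_surjective hπ] at hx
  obtain ⟨u, hu, rfl⟩ := hx
  change π.bracketForm σ (π u) z = 0
  have hmem : ⁅u, σ z⁆ ∈ π.kerCommutator := by
    have := LieSubmodule.lie_lie_le ⊤ ⊤ P (LieSubmodule.lie_mem_lie hu hσz)
    rw [sup_idem] at this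
    exact LieSubmodule.mono_lie_right ⊤ hP this
  rw [← hσ z, bracketForm_apply_map_map hσ, mkQ_apply, Quotient.mk_eq_zero]
  exact hmem

end LieHom

theorem schurMultiplierDim_add_finrank_derivedSeries_one {k L X : Type*} [Field k] [LieRing L]
    [LieAlgebra k L] (π : FreeLieAlgebra k X →ₗ⁅k⁆ L) (hπ : Function.Surjective π)
    [FiniteDimensional k (map π.kerCommutator.mkQ (derivedSeries k (FreeLieAlgebra k X) 1 :
      Submodule k (FreeLieAlgebra k X)))] :
    schurMultiplierDim k π + finrank k (derivedSeries k L 1) =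
      finrank k (map π.kerCommutator.mkQ (derivedSeries k (FreeLieAlgebra k X) 1 :
        Submodule k (FreeLieAlgebra k X))) := by
  have hJ : π.kerCommutator ≤ LinearMap.ker (π : FreeLieAlgebra k X →ₗ[k] L) := by
    rw [← LieHom.ker_toSubmodule]
    exact LieSubmodule.lie_le_right _ _
  have hD : map (π : FreeLieAlgebra k X →ₗ[k] L) (derivedSeries k (FreeLieAlgebra k X) 1) =
      derivedSeries k L 1 := by
    rw [LieIdeal.toLieSubalgebra_toSubmodule, ← LieIdeal.coe_map_of_surjective hπ,
      LieIdeal.derivedSeries_map_eq 1 hπ, LieIdeal.toLieSubalgebra_toSubmodule]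
  rw [← finrank_map_mkQ_inf_ker_add_finrank_map hJ, hD, ← finrank_quotient_comap_subtype_eq]
  rfl

theorem schurMultiplier_le_of_nilpotent_general
    (k : Type*) [Field k] (L : Type*) [LieRing L] [LieAlgebra k L]
    [FiniteDimensional k L]
    (n m d : ℕ)
    (hn : n = Module.finrank k L)
    (hm : m = Module.finrank k (LieAlgebra.derivedSeries k L 1 : LieIdeal k L))
    (hd : d = Module.finrank k (LieAlgebra.center k L : LieIdeal k L))
    {X : Type*} (π : FreeLieAlgebra k X →ₗ⁅k⁆ L) (hπ : Function.Surjective π) :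
    (schurMultiplierDim k π : ℚ) ≤
      (1 / 2 : ℚ) * ((n : ℚ) - m) * ((n : ℚ) - m - 1) + m * ((n : ℚ) - d - 1) := by
  obtain ⟨σ, hπσ⟩ := (π : FreeLieAlgebra k X →ₗ[k] L).exists_rightInverse_of_surjective
    (LinearMap.range_eq_top.2 hπ)
  have hσ (x : L) : π (σ x) = x := LinearMap.congr_fun hπσ x
  have : FiniteDimensional k (map π.kerCommutator.mkQ
      (derivedSeries k (FreeLieAlgebra k X) 1 : Submodule k (FreeLieAlgebra k X))) := by
    rw [LieHom.map_mkQ_derivedSeries_one hπ hσ]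
    infer_instance
  have hm' : finrank k (LieSubmodule.toSubmodule (derivedSeries k L 1)) = m := hm.symm
  have hd' : finrank k (LieSubmodule.toSubmodule (center k L)) = d := hd.symm
  have hbound : schurMultiplierDim k π + m ≤ (n - m).choose 2 + m * (n - d) := by
    have := LieHom.bracketForm_isAlt.finrank_map₂_top_le
      fun _ hx _ hz => LieHom.bracketForm_eq_zero_of_mem_center hπ hσ hx hz
    rwa [← LieHom.map_mkQ_derivedSeries_one hπ hσ,
      ← schurMultiplierDim_add_finrank_derivedSeries_one π hπ, ← hn, ← hm, hm', hd'] at this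
  have hmn : m ≤ n := hn ▸ hm' ▸ Submodule.finrank_le _
  have hdn : d ≤ n := hn ▸ hd' ▸ Submodule.finrank_le _
  have hcast : (((n - m).choose 2 + m * (n - d) : ℕ) : ℚ) =
      (1 / 2 : ℚ) * ((n : ℚ) - m) * ((n : ℚ) - m - 1) + m * ((n : ℚ) - d) := by
    rw [Nat.cast_add, Nat.cast_choose_two, Nat.cast_mul, Nat.cast_sub hmn, Nat.cast_sub hdn]
    ring
  have hbound' := (Nat.cast_le (α := ℚ)).2 hbound
  push_cast [hcast] at hbound'
  linarith

/-- For a finite-dimensional nilpotent Lie algebra `L` with `dim L = n`,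
`dim [L,L] = m`, `dim Z(L) = d`, every free presentation gives
`dim M(L) ≤ (1/2)(n−m)(n−m−1) + m(n−d−1)`. -/
theorem schurMultiplier_le_of_nilpotent
    (k : Type*) [Field k] (L : Type*) [LieRing L] [LieAlgebra k L]
    [FiniteDimensional k L] [LieRing.IsNilpotent L]
    (n m d : ℕ)
    (hn : n = Module.finrank k L)
    (hm : m = Module.finrank k (LieAlgebra.derivedSeries k L 1 : LieIdeal k L))
    (hd : d = Module.finrank k (LieAlgebra.center k L : LieIdeal k L))
    {X : Type*} (π : FreeLieAlgebra k X →ₗ⁅k⁆ L) (hπ : Function.Surjective π) :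
    (schurMultiplierDim k π : ℚ) ≤
      (1 / 2 : ℚ) * ((n : ℚ) - m) * ((n : ℚ) - m - 1) + m * ((n : ℚ) - d - 1) :=
  schurMultiplier_le_of_nilpotent_general k L n m d hn hm hd π hπ
end

section
/- If L is a finite-dimensional nilpotent Lie algebra over a field k, then the Frattini subalgebra Φ(L), defined as the intersection of all maximal proper Lie subalgebras of L, equals the derived subalgebra [L,L]. -/
/-!
A subspace containing `[L, L]` is automatically a subalgebra, so every hyperplane through
`[L, L]` is a maximal subalgebra and `Φ(L) ≤ [L, L]` holds in any Lie algebra over a field.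
Conversely, nilpotent Lie algebras satisfy the normalizer condition, so a maximal subalgebra `M`
is an ideal; then `M + k x` is a subalgebra for any `x ∉ M`, hence equals `L`, and so
`[L, L] = [M + k x, M + k x] ≤ M`.
-/

/-- The Frattini subalgebra of a Lie algebra: the intersection of all maximal proper Lie
subalgebras (a maximal proper subalgebra is precisely a coatom in the lattice of Lie
subalgebras). -/
noncomputable def frattiniLieSubalgebra (k : Type*) (L : Type*) [Field k] [LieRing L]
    [LieAlgebra k L] : LieSubalgebra k L :=
  sInf {S : LieSubalgebra k L | IsCoatom S}

namespace LieSubalgebra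

variable {R L : Type*} [CommRing R] [LieRing L] [LieAlgebra R L]

theorem derivedSeries_one_le_iff {M : LieSubalgebra R L} :
    LieIdeal.toLieSubalgebra R L (LieAlgebra.derivedSeries R L 1) ≤ M ↔
      ∀ x y : L, ⁅x, y⁆ ∈ M := by
  rw [← toSubmodule_le_toSubmodule, LieAlgebra.coe_derivedSeries_one_eq, Submodule.span_le]
  constructor
  · exact fun h x y => h ⟨x, y, rfl⟩
  · rintro h _ ⟨x, y, rfl⟩
    exact h x y

theorem lie_mem_derivedSeries_one (x y : L) : ⁅x, y⁆ ∈ LieAlgebra.derivedSeries R L 1 :=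
  derivedSeries_one_le_iff.mp le_rfl x y

def ofForallLieMem (p : Submodule R L) (h : ∀ x y : L, ⁅x, y⁆ ∈ p) : LieSubalgebra R L :=
  { p with lie_mem' := fun _ _ => h _ _ }

theorem isCoatom_of_isCoatom_toSubmodule {S : LieSubalgebra R L}
    (h : IsCoatom S.toSubmodule) : IsCoatom S :=
  ⟨fun hS => h.1 (by rw [hS, top_toSubmodule]),
    fun T hT => toSubmodule_injective <| h.2 _ <|
      ((toSubmodule_le_toSubmodule _ _).mpr hT.le).lt_of_ne
        fun e => hT.ne (toSubmodule_injective e)⟩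

theorem eq_top_of_normalizer_eq_self [LieRing.IsNilpotent L] {H : LieSubalgebra R L}
    (h : H.normalizer = H) : H = ⊤ := by
  have : LieModule.IsNilpotent H L :=
    Function.Injective.lieModuleIsNilpotent (f := H.incl) (g := LinearMap.id)
      (fun _ _ => rfl) Function.injective_id
  obtain ⟨n, hn⟩ := (LieModule.isNilpotent_iff_exists_ucs_eq_top R).mp this
  have hH : H.toLieSubmodule.normalizer = H.toLieSubmodule := by
    rw [← LieSubmodule.toSubmodule_inj, coe_normalizer_eq_normalizer, h, coe_toLieSubmodule]
  have := LieSubmodule.ucs_le_of_normalizer_eq_self hH n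
  rw [hn, top_le_iff, ← LieSubmodule.toSubmodule_inj, coe_toLieSubmodule] at this
  exact toSubmodule_injective this

theorem normalizer_eq_top_of_isCoatom [LieRing.IsNilpotent L] {M : LieSubalgebra R L}
    (hM : IsCoatom M) : M.normalizer = ⊤ :=
  hM.2 _ (M.le_normalizer.lt_of_ne fun h => hM.1 (eq_top_of_normalizer_eq_self h.symm))

theorem lie_mem_of_isCoatom_of_normalizer_eq_top {M : LieSubalgebra R L} (hM : IsCoatom M)
    (hN : M.normalizer = ⊤) (y z : L) : ⁅y, z⁆ ∈ M := by
  obtain ⟨x, hxM⟩ : ∃ x, x ∉ M := by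
    by_contra! h
    exact hM.1 (eq_top_iff.mpr fun x _ => h x)
  have hx : x ∈ M.normalizer := hN ▸ mem_top x
  let K : LieSubalgebra R L :=
    { (R ∙ x) ⊔ M.toSubmodule with lie_mem' := lie_mem_sup_of_mem_normalizer hx }
  have hK : K = ⊤ := by
    refine hM.2 K (lt_of_le_of_ne ((toSubmodule_le_toSubmodule M K).mp le_sup_right) ?_)
    intro hMK
    exact hxM (hMK ▸ Submodule.mem_sup_left (Submodule.mem_span_singleton_self x))
  have hy : y ∈ K := hK ▸ mem_top y
  have hz : z ∈ K := hK ▸ mem_top z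
  obtain ⟨_, hu, m, hm, rfl⟩ := Submodule.mem_sup.mp hy
  obtain ⟨_, hv, m', hm', rfl⟩ := Submodule.mem_sup.mp hz
  obtain ⟨a, rfl⟩ := Submodule.mem_span_singleton.mp hu
  obtain ⟨b, rfl⟩ := Submodule.mem_span_singleton.mp hv
  have hxm' : ⁅x, m'⁆ ∈ M := ideal_in_normalizer hx hm'
  have hmx : ⁅m, x⁆ ∈ M := by rw [← lie_skew]; exact M.neg_mem (ideal_in_normalizer hx hm)
  simp only [add_lie, lie_add, smul_lie, lie_smul, lie_self, smul_zero, zero_add]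
  exact M.add_mem (M.smul_mem b hmx) (M.add_mem (M.smul_mem a hxm') (M.lie_mem hm hm'))

end LieSubalgebra

open LieSubalgebra in
theorem frattiniLieSubalgebra_le_derivedSeries_one (k L : Type*) [Field k] [LieRing L]
    [LieAlgebra k L] :
    frattiniLieSubalgebra k L ≤
      LieIdeal.toLieSubalgebra k L (LieAlgebra.derivedSeries k L 1) := by
  intro z hz
  by_contra hzD
  obtain ⟨f, hfz, hf⟩ := Submodule.exists_dual_map_eq_bot_of_notMem hzD inferInstance
  have hbracket (x y : L) : ⁅x, y⁆ ∈ LinearMap.ker f :=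
    LinearMap.le_ker_iff_map.mpr hf (lie_mem_derivedSeries_one x y)
  have hW : IsCoatom (ofForallLieMem (LinearMap.ker f) hbracket) :=
    isCoatom_of_isCoatom_toSubmodule
      (LinearMap.isCoatom_ker_of_surjective (LinearMap.surjective fun h => hfz (by simp [h])))
  exact hfz ((sInf_le hW : frattiniLieSubalgebra k L ≤ _) hz)

theorem frattini_eq_derived_of_nilpotent_general
    (k : Type*) (L : Type*) [Field k] [LieRing L] [LieAlgebra k L]
    [LieRing.IsNilpotent L] :
    frattiniLieSubalgebra k L =
      LieIdeal.toLieSubalgebra k L (LieAlgebra.derivedSeries k L 1) :=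
  (frattiniLieSubalgebra_le_derivedSeries_one k L).antisymm <| le_sInf fun _ hM =>
    LieSubalgebra.derivedSeries_one_le_iff.mpr <|
      LieSubalgebra.lie_mem_of_isCoatom_of_normalizer_eq_top hM
        (LieSubalgebra.normalizer_eq_top_of_isCoatom hM)

/-- For a finite-dimensional nilpotent Lie algebra `L`, the Frattini
subalgebra `Φ(L)` equals the derived subalgebra `[L,L]`. -/
theorem frattini_eq_derived_of_nilpotent
    (k : Type*) (L : Type*) [Field k] [LieRing L] [LieAlgebra k L]
    [FiniteDimensional k L] [LieRing.IsNilpotent L] :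
    frattiniLieSubalgebra k L =
      LieIdeal.toLieSubalgebra k L (LieAlgebra.derivedSeries k L 1) :=
  frattini_eq_derived_of_nilpotent_general k L
end
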